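/- arXiv:1704.08523 — 3 statements merged into one kernel-verified Lean document; each statement's English description precedes it below -/
import Mathlib

section
/- Let X be strictly positive with X and L independent, and suppose L has a continuous strictly increasing distribution function F_L. Set q := F_L^{-1}(1−α) for α ∈ (0,1), and S(φ) := φ·(X−1) − X·L. Then P(S(q) ≤ −q) = α, i.e. −q is the α-quantile of S(q); equivalently VaR_α[S(q)] = q = VaR_α[−L]. -/
open MeasureTheory ProbabilityTheory

/-- If `L` has a continuous strictly increasing CDF `F_L`,
`q = F_L⁻¹(1−α)`, and `S(φ) = φ(X−1) − X·L` with `X > 0` a.s. independent of `L`,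
then `P(S(q) ≤ −q) = α`, i.e. `VaR_α[S(q)] = q = VaR_α[−L]`. -/
theorem stmt1 {Ω : Type*} [MeasurableSpace Ω] (μ : Measure Ω) [IsProbabilityMeasure μ]
    (X L : Ω → ℝ) (hX : Measurable X) (hL : Measurable L)
    (hXpos : ∀ᵐ ω ∂μ, 0 < X ω) (hindep : IndepFun X L μ)
    (FL : ℝ → ℝ) (hFL : ∀ x, FL x = (μ {ω | L ω ≤ x}).toReal)
    (hFLcont : Continuous FL) (hFLmono : StrictMono FL)
    (α : ℝ) (hα : α ∈ Set.Ioo (0:ℝ) 1)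
    (q : ℝ) (hq : FL q = 1 - α) :
    μ {ω | q * (X ω - 1) - X ω * L ω ≤ -q} = ENNReal.ofReal α := by
  obtain ⟨hα0, hα1⟩ := hα
  set ν : Measure ℝ := μ.map L with hν
  haveI : IsProbabilityMeasure ν := Measure.isProbabilityMeasure_map hL.aemeasurable
  -- FL in terms of ν
  have hFLν : ∀ x, FL x = (ν (Set.Iic x)).toReal := by
    intro x
    rw [hFL x, hν, Measure.map_apply hL measurableSet_Iic]
    rfl
  have hIic : ∀ x, ν (Set.Iic x) = ENNReal.ofReal (FL x) := by
    intro x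
    rw [hFLν x, ENNReal.ofReal_toReal (measure_ne_top ν _)]
  -- the event equals {q ≤ L} a.e.
  have hset : {ω | q * (X ω - 1) - X ω * L ω ≤ -q} =ᵐ[μ] {ω | q ≤ L ω} := by
    rw [Filter.eventuallyEq_set]
    filter_upwards [hXpos] with ω hx
    constructor <;> intro h <;> nlinarith
  rw [measure_congr hset]
  have hmap : μ {ω | q ≤ L ω} = ν (Set.Ici q) := by
    rw [hν, Measure.map_apply hL measurableSet_Ici]
    rfl
  rw [hmap]
  -- ν {q} = 0
  have hpoint : ν {q} = 0 := by
    by_contra hne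
    have hpos : 0 < (ν {q}).toReal :=
      ENNReal.toReal_pos hne (measure_ne_top ν _)
    obtain ⟨δ, hδ, hδ2⟩ := Metric.continuousAt_iff.mp (hFLcont.continuousAt (x := q))
      ((ν {q}).toReal) hpos
    have hle : ν {q} ≤ ν (Set.Ioc (q - δ/2) q) := by
      apply measure_mono
      intro x hx
      rw [Set.mem_singleton_iff] at hx
      subst hx
      exact ⟨by linarith, le_rfl⟩
    have hsplit : ν (Set.Iic (q - δ/2)) + ν (Set.Ioc (q - δ/2) q) = ν (Set.Iic q) := by
      rw [← measure_union _ measurableSet_Ioc, Set.Iic_union_Ioc_eq_Iic (by linarith)]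
      exact Set.Iic_disjoint_Ioc le_rfl
    have hdist : dist (q - δ/2) q < δ := by
      rw [Real.dist_eq]
      rw [abs_of_nonpos (by linarith)]
      linarith
    have hFLclose := hδ2 hdist
    rw [Real.dist_eq] at hFLclose
    have h1 : (ν (Set.Ioc (q - δ/2) q)).toReal = FL q - FL (q - δ/2) := by
      have := congrArg ENNReal.toReal hsplit
      rw [ENNReal.toReal_add (measure_ne_top ν _) (measure_ne_top ν _)] at this
      rw [← hFLν, ← hFLν] at this
      linarith
    have h2 : (ν {q}).toReal ≤ (ν (Set.Ioc (q - δ/2) q)).toReal :=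
      ENNReal.toReal_mono (measure_ne_top ν _) hle
    have h3 : FL (q - δ/2) ≤ FL q := (hFLmono.le_iff_le).mpr (by linarith)
    rw [abs_of_nonpos (by linarith)] at hFLclose
    linarith
  have hIci : ν (Set.Ici q) = ν (Set.Ioi q) := by
    have : Set.Ici q = {q} ∪ Set.Ioi q := by
      ext x; simp [le_iff_lt_or_eq, or_comm, eq_comm]
    refine le_antisymm ?_ (measure_mono Set.Ioi_subset_Ici_self)
    calc ν (Set.Ici q) ≤ ν {q} + ν (Set.Ioi q) := this ▸ measure_union_le _ _
    _ = ν (Set.Ioi q) := by rw [hpoint, zero_add]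
  rw [hIci]
  have hcompl : ν (Set.Ioi q) = 1 - ν (Set.Iic q) := by
    rw [← Set.compl_Iic, measure_compl measurableSet_Iic (measure_ne_top ν _),
      measure_univ]
  rw [hcompl, hIic q, hq]
  rw [← ENNReal.ofReal_one, ← ENNReal.ofReal_sub _ (by linarith)]
  norm_num
end

section
/- Let X be strictly positive with E[X] = 1, independent of L, where L has continuous strictly increasing CDF F_L, and L, X·L are integrable. With q = F_L^{-1}(1−α) and S(q) = q·(X−1) − X·L, one has E[S(q)·1_{S(q) ≤ −q}] = E[−L·1_{L ≥ q}]. Consequently ES_α[S(q)] = ES_α[−L], where ES_α[Y] := −α^{-1}·E[Y·1_{Y ≤ z_α}] with z_α the α-quantile of Y. -/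
/-!
Since `q (X - 1) - X L + q = X (q - L)` and `X > 0`, the event `{S(q) ≤ -q}` is `{L ≥ q}`
up to a null set. On that event independence lets `X` be integrated out: `E[X 1_{L ≥ q}] = P(L ≥ q)`
and `E[X L 1_{L ≥ q}] = E[L 1_{L ≥ q}]` because `E[X] = 1`, so the two `q`-terms cancel and only
`E[-L 1_{L ≥ q}]` remains.
-/

open MeasureTheory ProbabilityTheory

lemma mul_sub_one_sub_mul_le_neg_iff {q x l : ℝ} (hx : 0 < x) :
    q * (x - 1) - x * l ≤ -q ↔ q ≤ l :=
  calc q * (x - 1) - x * l ≤ -q ↔ x * q ≤ x * l := by constructor <;> intro h <;> linarith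
    _ ↔ q ≤ l := mul_le_mul_iff_right₀ hx

lemma ProbabilityTheory.IndepFun.setIntegral_preimage_mul_comp {Ω β : Type*}
    [MeasurableSpace Ω] [MeasurableSpace β] {μ : Measure Ω} {X : Ω → ℝ} {L : Ω → β}
    (hindep : IndepFun X L μ) (hX : AEStronglyMeasurable X μ) (hL : Measurable L)
    {s : Set β} (hs : MeasurableSet s) {g : β → ℝ} (hg : Measurable g) :
    ∫ ω in L ⁻¹' s, X ω * g (L ω) ∂μ = (∫ ω, X ω ∂μ) * ∫ ω in L ⁻¹' s, g (L ω) ∂μ := by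
  have hgs : Measurable (s.indicator g) := hg.indicator hs
  have hind : IndepFun X (s.indicator g ∘ L) μ := hindep.comp measurable_id hgs
  have hprod : (L ⁻¹' s).indicator (fun ω => X ω * g (L ω)) = X * (s.indicator g ∘ L) := by
    ext ω
    by_cases h : L ω ∈ s <;> simp [h]
  rw [← integral_indicator (hL hs), ← integral_indicator (hL hs), hprod,
    hind.integral_mul_eq_mul_integral hX (hgs.comp hL).aestronglyMeasurable]
  rfl

theorem stmt2_general {Ω : Type*} [MeasurableSpace Ω] (μ : Measure Ω) [IsProbabilityMeasure μ]
    (X L : Ω → ℝ) (hL : Measurable L)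
    (hXpos : ∀ᵐ ω ∂μ, 0 < X ω) (hindep : IndepFun X L μ)
    (hXint : Integrable X μ) (hXmean : ∫ ω, X ω ∂μ = 1)
    (hXLint : Integrable (fun ω => X ω * L ω) μ)
    (α : ℝ)
    (q : ℝ) :
    (∫ ω in {ω | q * (X ω - 1) - X ω * L ω ≤ -q},
        (q * (X ω - 1) - X ω * L ω) ∂μ) = ∫ ω in {ω | q ≤ L ω}, (-L ω) ∂μ ∧
    -(α⁻¹ * ∫ ω in {ω | q * (X ω - 1) - X ω * L ω ≤ -q},
        (q * (X ω - 1) - X ω * L ω) ∂μ) = -(α⁻¹ * ∫ ω in {ω | q ≤ L ω}, (-L ω) ∂μ) := by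
  set A : Set Ω := L ⁻¹' Set.Ici q
  have hevent : {ω | q * (X ω - 1) - X ω * L ω ≤ -q} =ᵐ[μ] A := by
    filter_upwards [hXpos] with ω hω
    exact propext (mul_sub_one_sub_mul_le_neg_iff hω)
  have hXA : ∫ ω in A, X ω ∂μ = ∫ ω in A, 1 ∂μ := by
    simpa only [mul_one, hXmean, one_mul] using hindep.setIntegral_preimage_mul_comp hXint.1 hL
      measurableSet_Ici (g := fun _ => 1) measurable_const
  have hXLA : ∫ ω in A, X ω * L ω ∂μ = ∫ ω in A, L ω ∂μ := by
    rw [hindep.setIntegral_preimage_mul_comp hXint.1 hL measurableSet_Ici (g := fun x => x)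
      measurable_id, hXmean, one_mul]
  have hmain : ∫ ω in A, (q * (X ω - 1) - X ω * L ω) ∂μ = ∫ ω in A, -L ω ∂μ := by
    calc ∫ ω in A, (q * (X ω - 1) - X ω * L ω) ∂μ
        = q * (∫ ω in A, X ω ∂μ - ∫ ω in A, 1 ∂μ) - ∫ ω in A, X ω * L ω ∂μ := by
          have hX1 : Integrable (fun ω => X ω - 1) μ := hXint.sub (integrable_const 1)
          rw [integral_sub (hX1.const_mul q).restrict hXLint.restrict, integral_const_mul,
            integral_sub hXint.restrict (integrable_const 1).restrict]
      _ = ∫ ω in A, -L ω ∂μ := by rw [hXA, hXLA, integral_neg]; ring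
  rw [setIntegral_congr_set hevent]
  exact ⟨hmain, congrArg (fun I => -(α⁻¹ * I)) hmain⟩

/-- With `X > 0` a.s., `E[X] = 1`, `X ⊥ L`, `L` with continuous strictly
increasing CDF, `L` and `X·L` integrable, `q = F_L⁻¹(1−α)` and
`S(q) = q(X−1) − X·L`, one has `E[S(q)·1_{S(q) ≤ −q}] = E[−L·1_{L ≥ q}]`;
consequently `ES_α[S(q)] = ES_α[−L]`. -/
theorem stmt2 {Ω : Type*} [MeasurableSpace Ω] (μ : Measure Ω) [IsProbabilityMeasure μ]
    (X L : Ω → ℝ) (hX : Measurable X) (hL : Measurable L)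
    (hXpos : ∀ᵐ ω ∂μ, 0 < X ω) (hindep : IndepFun X L μ)
    (hXint : Integrable X μ) (hXmean : ∫ ω, X ω ∂μ = 1)
    (hLint : Integrable L μ) (hXLint : Integrable (fun ω => X ω * L ω) μ)
    (FL : ℝ → ℝ) (hFL : ∀ x, FL x = (μ {ω | L ω ≤ x}).toReal)
    (hFLcont : Continuous FL) (hFLmono : StrictMono FL)
    (α : ℝ) (hα : α ∈ Set.Ioo (0:ℝ) 1)
    (q : ℝ) (hq : FL q = 1 - α) :
    (∫ ω in {ω | q * (X ω - 1) - X ω * L ω ≤ -q},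
        (q * (X ω - 1) - X ω * L ω) ∂μ) = ∫ ω in {ω | q ≤ L ω}, (-L ω) ∂μ ∧
    -(α⁻¹ * ∫ ω in {ω | q * (X ω - 1) - X ω * L ω ≤ -q},
        (q * (X ω - 1) - X ω * L ω) ∂μ) = -(α⁻¹ * ∫ ω in {ω | q ≤ L ω}, (-L ω) ∂μ) :=
  stmt2_general μ X L hL hXpos hindep hXint hXmean hXLint α q
end

section
/- With X_σ = e^{σY}/M(σ) as above and central moments m̄_i(σ) := E[(X_σ − 1)^i], one has as σ → 0: m̄₂(σ) = σ² + μ₃σ³ + (7μ₄/12 − 5/4)σ⁴ + o(σ⁴), m̄₃(σ) = μ₃σ³ + (3/2)(μ₄ − 1)σ⁴ + o(σ⁴), and m̄₄(σ) = μ₄σ⁴ + o(σ⁴). -/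
/-!
Writing `M` for the moment generating function, `m̄ᵢ(σ) = ∑ₖ (-1)^(i-k) C(i,k) M(kσ)/M(σ)^k`,
so it suffices to expand each `M(kσ)/M(σ)^k` to order `σ⁴`. Since `M` is analytic at `0` with
`M⁽ʲ⁾(0) = E[Yʲ]`, Taylor's theorem gives `M(t) = 1 + t²/2 + μ₃t³/6 + μ₄t⁴/24 + o(t⁴)`. Writing
`M = 1 + q` with `q(t) = t²/2 + O(t³)`, one gets `M(σ)^k = 1 + k q(σ) + C(k,2) σ⁴/4 + o(σ⁴)`,
because `q² = σ⁴/4 + O(σ⁵)`; dividing `M(kσ)` by this is then a computation with polynomials.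
-/

open MeasureTheory Filter Asymptotics ProbabilityTheory Topology Nat

lemma isBigO_pow_of_sub_isBigO_pow_succ {f : ℝ → ℝ} {α : ℝ} {n : ℕ}
    (hf : (fun t ↦ f t - α * t ^ n) =O[𝓝 0] fun t ↦ t ^ (n + 1)) :
    f =O[𝓝 0] fun t ↦ t ^ n :=
  (hf.trans (isLittleO_pow_pow n.lt_succ_self).isBigO).add
    ((isBigO_refl (fun t : ℝ ↦ t ^ n) _).const_mul_left α) |>.congr_left fun t ↦ by ring

lemma mul_sub_isBigO_pow_five {f g : ℝ → ℝ} {α β : ℝ}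
    (hf : (fun t ↦ f t - α * t ^ 2) =O[𝓝 0] fun t ↦ t ^ 3)
    (hg : (fun t ↦ g t - β * t ^ 2) =O[𝓝 0] fun t ↦ t ^ 3) :
    (fun t ↦ f t * g t - α * β * t ^ 4) =O[𝓝 0] fun t ↦ t ^ 5 := by
  have h₁ : (fun t ↦ (f t - α * t ^ 2) * g t) =O[𝓝 0] fun t ↦ t ^ 5 :=
    (hf.mul (isBigO_pow_of_sub_isBigO_pow_succ hg)).congr_right fun t ↦ by ring
  have h₂ : (fun t ↦ α * t ^ 2 * (g t - β * t ^ 2)) =O[𝓝 0] fun t ↦ t ^ 5 :=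
    (((isBigO_refl (fun t : ℝ ↦ t ^ 2) _).const_mul_left α).mul hg).congr_right fun t ↦ by ring
  exact (h₁.add h₂).congr_left fun t ↦ by ring

lemma pow_mul_isBigO_pow {g : ℝ → ℝ} (hg : Continuous g) (n : ℕ) :
    (fun t ↦ t ^ n * g t) =O[𝓝 0] fun t ↦ t ^ n :=
  ((isBigO_refl (fun t : ℝ ↦ t ^ n) _).mul ((hg.tendsto 0).isBigO_one ℝ)).congr_right
    fun _ ↦ mul_one _

lemma tendsto_zero_of_sub_isBigO {q : ℝ → ℝ}
    (hq : (fun t ↦ q t - 2⁻¹ * t ^ 2) =O[𝓝 0] fun t ↦ t ^ 3) : Tendsto q (𝓝 0) (𝓝 0) :=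
  (isBigO_pow_of_sub_isBigO_pow_succ hq).trans_tendsto <| by
    simpa using (continuous_pow 2).tendsto (0 : ℝ)

lemma one_add_pow_sub_isLittleO {q : ℝ → ℝ}
    (hq : (fun t ↦ q t - 2⁻¹ * t ^ 2) =O[𝓝 0] fun t ↦ t ^ 3) (k : ℕ) :
    (fun t ↦ (1 + q t) ^ k - (1 + k * q t + k * (k - 1) / 8 * t ^ 4)) =o[𝓝 0] fun t ↦ t ^ 4 := by
  have hq_sq : (fun t ↦ q t ^ 2 - t ^ 4 / 4) =o[𝓝 0] fun t ↦ t ^ 4 :=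
    ((mul_sub_isBigO_pow_five hq hq).trans_isLittleO (isLittleO_pow_pow (by norm_num))).congr_left
      fun t ↦ by ring
  have hq_lim := tendsto_zero_of_sub_isBigO hq
  have h_bdd : (fun t ↦ 1 + q t) =O[𝓝 0] fun _ ↦ (1 : ℝ) := by
    simpa using (hq_lim.const_add 1).isBigO_one ℝ
  induction k with
  | zero => simp
  | succ k ih =>
    have h₁ := (h_bdd.mul_isLittleO ih).congr_right fun t ↦ one_mul _
    have h₂ := hq_sq.const_mul_left (k : ℝ)
    have h₃ := ((isBigO_refl (fun t : ℝ ↦ t ^ 4) _).mul_isLittleO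
      ((isLittleO_one_iff ℝ).2 hq_lim)).congr_right fun t ↦ mul_one _
    refine ((h₁.add h₂).add (h₃.const_mul_left ((k : ℝ) * (k - 1) / 8))).congr_left fun t ↦ ?_
    push_cast
    ring

/-- The Taylor polynomial of order 4 of the moment generating function of a centred variable with
unit variance and third and fourth moments `a` and `b`. -/
noncomputable def mgfQuartic (a b t : ℝ) : ℝ := 1 + t ^ 2 / 2 + a * t ^ 3 / 6 + b * t ^ 4 / 24

/-- The expansion to order `σ⁴` of the raw moment `m_k(σ) = M(kσ) / M(σ)^k` of `X_σ`. -/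
noncomputable def momentQuartic (a b k t : ℝ) : ℝ :=
  1 + (k ^ 2 - k) / 2 * t ^ 2 + (k ^ 3 - k) * a / 6 * t ^ 3
    + ((k ^ 4 - k) * b / 24 + k * (k + 1) / 8 - k ^ 3 / 4) * t ^ 4

lemma div_pow_sub_momentQuartic_isLittleO {M : ℝ → ℝ} {a b : ℝ}
    (hM : (fun t ↦ M t - mgfQuartic a b t) =o[𝓝 0] fun t ↦ t ^ 4) (k : ℕ) :
    (fun σ ↦ M (k * σ) / M σ ^ k - momentQuartic a b k σ) =o[𝓝 0] fun σ ↦ σ ^ 4 := by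
  have hq : (fun t ↦ (M t - 1) - 2⁻¹ * t ^ 2) =O[𝓝 0] fun t ↦ t ^ 3 :=
    ((hM.isBigO.trans (isLittleO_pow_pow (by norm_num)).isBigO).add
      (pow_mul_isBigO_pow (g := fun t ↦ a / 6 + b * t / 24) (by fun_prop) 3)).congr_left
      fun t ↦ by simp only [mgfQuartic]; ring
  have hM_lim : Tendsto M (𝓝 0) (𝓝 1) := by
    simpa using (tendsto_zero_of_sub_isBigO hq).add_const 1
  have hM_pow := (one_add_pow_sub_isLittleO hq k).congr_left fun t ↦ by rw [add_sub_cancel]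
  have hM_scaled : (fun σ ↦ M (k * σ) - mgfQuartic a b (k * σ)) =o[𝓝 0] fun σ ↦ σ ^ 4 :=
    (hM.comp_tendsto (by simpa using (tendsto_id (x := 𝓝 (0 : ℝ))).const_mul (k : ℝ))).trans_isBigO
      ((isBigO_refl (fun σ : ℝ ↦ σ ^ 4) _).const_mul_left ((k : ℝ) ^ 4) |>.congr_left
        fun σ ↦ by simp [mul_pow])
  have hu : (fun σ ↦ (momentQuartic a b k σ - 1) - (k ^ 2 - k) / 2 * σ ^ 2)
      =O[𝓝 0] fun σ ↦ σ ^ 3 :=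
    (pow_mul_isBigO_pow (g := fun σ ↦ (k ^ 3 - k) * a / 6
      + ((k ^ 4 - k) * b / 24 + k * (k + 1) / 8 - k ^ 3 / 4) * σ) (by fun_prop) 3).congr_left
      fun σ ↦ by simp only [momentQuartic]; ring
  have hW : (fun σ ↦ (k * (mgfQuartic a b σ - 1) + k * (k - 1) / 8 * σ ^ 4) - k / 2 * σ ^ 2)
      =O[𝓝 0] fun σ ↦ σ ^ 3 :=
    (pow_mul_isBigO_pow (g := fun σ ↦ k * (a / 6 + b * σ / 24) + k * (k - 1) / 8 * σ)
      (by fun_prop) 3).congr_left fun σ ↦ by simp only [mgfQuartic]; ring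
  have huW :=
    (mul_sub_isBigO_pow_five hu hW).trans_isLittleO (isLittleO_pow_pow (m := 4) (by norm_num))
  have hU_cont : Continuous (momentQuartic a b k) := by unfold momentQuartic; fun_prop
  have hU_bdd := (hU_cont.tendsto 0).isBigO_one ℝ
  have h_num : (fun σ ↦ M (k * σ) - momentQuartic a b k σ * M σ ^ k) =o[𝓝 0] fun σ ↦ σ ^ 4 := by
    have h₁ := (hU_bdd.mul_isLittleO hM_pow).congr_right fun σ ↦ one_mul _
    have h₂ := (hU_bdd.mul_isLittleO (hM.const_mul_left (k : ℝ))).congr_right fun σ ↦ one_mul _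
    -- `momentQuartic` is chosen so that `P(kσ) - U·(1 + W)` is exactly `-(u W - k (k² - k) σ⁴ / 4)`
    -- for `P = mgfQuartic`, `U = 1 + u = momentQuartic` and `1 + W` the expansion of `M(σ)^k`.
    refine (((hM_scaled.sub h₁).sub h₂).sub huW).congr_left fun σ ↦ ?_
    simp only [mgfQuartic, momentQuartic]
    ring
  have h_inv : Tendsto (fun σ ↦ (M σ ^ k)⁻¹) (𝓝 0) (𝓝 1) := by
    simpa using (hM_lim.pow k).inv₀ (by simp)
  refine ((h_num.mul_isBigO (h_inv.isBigO_one ℝ)).congr_right fun σ ↦ mul_one _).congr' ?_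
    EventuallyEq.rfl
  filter_upwards [hM_lim.eventually_ne one_ne_zero] with σ hσ
  field_simp

namespace ProbabilityTheory

variable {Ω : Type*} {m : MeasurableSpace Ω} {X : Ω → ℝ} {μ : Measure Ω}

lemma mgf_sub_taylor_isLittleO (h : 0 ∈ interior (integrableExpSet X μ)) (n : ℕ) :
    (fun t ↦ mgf X μ t - ∑ k ∈ Finset.range (n + 1), μ[X ^ k] / k ! * t ^ k)
      =o[𝓝 0] fun t ↦ t ^ n := by
  have hs : IsOpen (interior (integrableExpSet X μ)) := isOpen_interior
  have hTaylor := taylor_isLittleO (n := n) convex_integrableExpSet.interior h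
    (analyticOnNhd_mgf.contDiffOn hs.uniqueDiffOn)
  rw [nhdsWithin_eq_nhds.2 (hs.mem_nhds h)] at hTaylor
  simpa [taylor_within_apply, iteratedDerivWithin_of_isOpen hs h, iteratedDeriv_mgf_zero h,
    div_eq_inv_mul, mul_comm, mul_assoc] using hTaylor

lemma integral_exp_div_mgf_sub_one_pow {t : ℝ} {i : ℕ}
    (h_int : ∀ k ≤ i, Integrable (fun ω ↦ Real.exp (k * t * X ω)) μ) :
    ∫ ω, (Real.exp (t * X ω) / mgf X μ t - 1) ^ i ∂μ
      = ∑ k ∈ Finset.range (i + 1),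
          (-1) ^ (k + i) * i.choose k * (mgf X μ (k * t) / mgf X μ t ^ k) := by
  have h_pow (k : ℕ) (ω : Ω) : (Real.exp (t * X ω) / mgf X μ t) ^ k
      = Real.exp (k * t * X ω) / mgf X μ t ^ k := by
    rw [div_pow, ← Real.exp_nat_mul, mul_assoc]
  simp_rw [sub_pow, one_pow, mul_one, h_pow, mul_right_comm _ (Real.exp _ / _)]
  rw [integral_finsetSum]
  · refine Finset.sum_congr rfl fun k _ ↦ ?_
    rw [integral_const_mul, integral_div]
    rfl
  · intro k hk
    exact ((h_int k (Finset.mem_range_succ_iff.1 hk)).div_const _).const_mul _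

lemma integral_exp_div_mgf_sub_one_pow_sub_isLittleO [IsProbabilityMeasure μ]
    (h₀ : 0 ∈ interior (integrableExpSet X μ))
    (hmean : ∫ ω, X ω ∂μ = 0) (hvar : ∫ ω, X ω ^ 2 ∂μ = 1) (i : ℕ) :
    (fun σ ↦ ∫ ω, (Real.exp (σ * X ω) / mgf X μ σ - 1) ^ i ∂μ
        - ∑ k ∈ Finset.range (i + 1), (-1) ^ (k + i) * i.choose k
          * momentQuartic (∫ ω, X ω ^ 3 ∂μ) (∫ ω, X ω ^ 4 ∂μ) k σ)
      =o[𝓝 0] fun σ ↦ σ ^ 4 := by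
  have h_taylor : (fun t ↦ mgf X μ t - mgfQuartic (∫ ω, X ω ^ 3 ∂μ) (∫ ω, X ω ^ 4 ∂μ) t)
      =o[𝓝 0] fun t ↦ t ^ 4 := by
    refine (mgf_sub_taylor_isLittleO h₀ 4).congr_left fun t ↦ ?_
    simp only [Finset.sum_range_succ, Finset.sum_range_zero, Pi.pow_apply, pow_zero, pow_one,
      integral_const, probReal_univ, smul_eq_mul, hmean, hvar, mgfQuartic, Nat.factorial]
    push_cast
    ring
  have h_int : ∀ᶠ σ in 𝓝 0, ∀ k ∈ Finset.range (i + 1), (k : ℝ) * σ ∈ integrableExpSet X μ := by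
    refine (Finset.range (i + 1)).eventually_all.2 fun k _ ↦ ?_
    have h_lim : Tendsto (fun σ : ℝ ↦ (k : ℝ) * σ) (𝓝 0) (𝓝 0) := by
      simpa using (tendsto_id (x := 𝓝 (0 : ℝ))).const_mul (k : ℝ)
    exact (h_lim.eventually (isOpen_interior.mem_nhds h₀)).mono fun σ hσ ↦ interior_subset hσ
  have h_sum := IsLittleO.fun_sum (s := Finset.range (i + 1)) fun k _ ↦
    (div_pow_sub_momentQuartic_isLittleO h_taylor k).const_mul_left ((-1) ^ (k + i) * i.choose k)
  refine h_sum.congr' ?_ EventuallyEq.rfl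
  filter_upwards [h_int] with σ hσ
  rw [integral_exp_div_mgf_sub_one_pow fun k hk ↦ hσ k (Finset.mem_range_succ_iff.2 hk),
    ← Finset.sum_sub_distrib]
  simp only [mul_sub]

end ProbabilityTheory

theorem stmt12_general {Ω : Type*} [MeasurableSpace Ω] (μ : Measure Ω) [IsProbabilityMeasure μ]
    (Y : Ω → ℝ)
    (hmean : ∫ ω, Y ω ∂μ = 0) (hvar : ∫ ω, (Y ω) ^ 2 ∂μ = 1)
    (μ₃ μ₄ : ℝ) (hμ₃ : μ₃ = ∫ ω, (Y ω) ^ 3 ∂μ) (hμ₄ : μ₄ = ∫ ω, (Y ω) ^ 4 ∂μ)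
    (ε : ℝ) (hε : 0 < ε)
    (hMGF : ∀ σ : ℝ, |σ| < ε → Integrable (fun ω => Real.exp (σ * Y ω)) μ)
    (M : ℝ → ℝ) (hM : ∀ σ, M σ = ∫ ω, Real.exp (σ * Y ω) ∂μ)
    (mbar : ℕ → ℝ → ℝ)
    (hmbar : ∀ (i : ℕ) (σ : ℝ),
      mbar i σ = ∫ ω, (Real.exp (σ * Y ω) / M σ - 1) ^ i ∂μ) :
    ((fun σ : ℝ => mbar 2 σ - (σ ^ 2 + μ₃ * σ ^ 3 + (7 * μ₄ / 12 - 5 / 4) * σ ^ 4))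
        =o[nhds (0 : ℝ)] fun σ => σ ^ 4) ∧
    ((fun σ : ℝ => mbar 3 σ - (μ₃ * σ ^ 3 + (3 / 2) * (μ₄ - 1) * σ ^ 4))
        =o[nhds (0 : ℝ)] fun σ => σ ^ 4) ∧
    ((fun σ : ℝ => mbar 4 σ - μ₄ * σ ^ 4)
        =o[nhds (0 : ℝ)] fun σ => σ ^ 4) := by
  obtain rfl : M = mgf Y μ := funext hM
  obtain rfl : mbar = fun i σ ↦ ∫ ω, (Real.exp (σ * Y ω) / mgf Y μ σ - 1) ^ i ∂μ :=
    funext₂ hmbar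
  have h₀ : 0 ∈ interior (integrableExpSet Y μ) :=
    mem_interior_iff_mem_nhds.2 <| mem_of_superset (Metric.ball_mem_nhds 0 hε)
      fun σ hσ ↦ hMGF σ (by simpa using hσ)
  have h_central := integral_exp_div_mgf_sub_one_pow_sub_isLittleO h₀ hmean hvar
  rw [← hμ₃, ← hμ₄] at h_central
  refine ⟨(h_central 2).congr_left ?_, (h_central 3).congr_left ?_,
    (h_central 4).congr_left ?_⟩ <;>
  · intro σ
    simp only [Finset.sum_range_succ, Finset.sum_range_zero, momentQuartic, Nat.choose]
    push_cast
    ring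

/-- With `X_σ = e^{σY}/M(σ)` and central moments
`m̄_i(σ) = E[(X_σ − 1)^i]`, as `σ → 0`:
`m̄₂(σ) = σ² + μ₃σ³ + (7μ₄/12 − 5/4)σ⁴ + o(σ⁴)`,
`m̄₃(σ) = μ₃σ³ + (3/2)(μ₄ − 1)σ⁴ + o(σ⁴)`, `m̄₄(σ) = μ₄σ⁴ + o(σ⁴)`. -/
theorem stmt12 {Ω : Type*} [MeasurableSpace Ω] (μ : Measure Ω) [IsProbabilityMeasure μ]
    (Y : Ω → ℝ) (hY : Measurable Y)
    (hmean : ∫ ω, Y ω ∂μ = 0) (hvar : ∫ ω, (Y ω) ^ 2 ∂μ = 1)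
    (μ₃ μ₄ : ℝ) (hμ₃ : μ₃ = ∫ ω, (Y ω) ^ 3 ∂μ) (hμ₄ : μ₄ = ∫ ω, (Y ω) ^ 4 ∂μ)
    (ε : ℝ) (hε : 0 < ε)
    (hMGF : ∀ σ : ℝ, |σ| < ε → Integrable (fun ω => Real.exp (σ * Y ω)) μ)
    (M : ℝ → ℝ) (hM : ∀ σ, M σ = ∫ ω, Real.exp (σ * Y ω) ∂μ)
    (mbar : ℕ → ℝ → ℝ)
    (hmbar : ∀ (i : ℕ) (σ : ℝ),
      mbar i σ = ∫ ω, (Real.exp (σ * Y ω) / M σ - 1) ^ i ∂μ) :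
    ((fun σ : ℝ => mbar 2 σ - (σ ^ 2 + μ₃ * σ ^ 3 + (7 * μ₄ / 12 - 5 / 4) * σ ^ 4))
        =o[nhds (0 : ℝ)] fun σ => σ ^ 4) ∧
    ((fun σ : ℝ => mbar 3 σ - (μ₃ * σ ^ 3 + (3 / 2) * (μ₄ - 1) * σ ^ 4))
        =o[nhds (0 : ℝ)] fun σ => σ ^ 4) ∧
    ((fun σ : ℝ => mbar 4 σ - μ₄ * σ ^ 4)
        =o[nhds (0 : ℝ)] fun σ => σ ^ 4) :=
  stmt12_general μ Y hmean hvar μ₃ μ₄ hμ₃ hμ₄ ε hε hMGF M hM mbar hmbar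
end
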